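/- arXiv:2304.14950 — 7 statements merged into one kernel-verified Lean document; each statement's English description precedes it below -/
import Mathlib

section
/- The final coalgebra of X ↦ (B × X)^A on Set is in bijection with the set of functions from nonempty finite lists over A to B, i.e., with B^(A⁺) where A⁺ denotes nonempty lists. -/
/-- Functions from nonempty finite lists over `A` to `B`, encoding a nonempty list
as a head in `A` together with a tail in `List A`. This is `B^(A⁺)`. -/
def NeListFun (A B : Type) : Type := A × List A → B

/-- The coalgebra structure on `B^(A⁺)` for the functor `X ↦ (B × X)^A`:
on input `a`, output the value at the singleton word `a`, and continue with the
function on words prefixed by `a`. -/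
def neListCoalg (A B : Type) : NeListFun A B → A → B × NeListFun A B :=
  fun f a => (f (a, []), fun p => f (a, p.1 :: p.2))

/-- Run a coalgebra on a nonempty word. -/
def runCoalg {A B S : Type} (c : S → A → B × S) : S → A → List A → B
  | s, a, [] => (c s a).1
  | s, a, b :: w => runCoalg c (c s a).2 b w

/-- `B^(A⁺)`, the set of functions from nonempty finite lists over `A` to `B`,
carries a final coalgebra structure for `X ↦ (B × X)^A`: every coalgebra has a
unique coalgebra morphism into it (hence the final coalgebra is in bijection
with `B^(A⁺)`). -/
theorem neListFun_final (A B : Type) (S : Type) (c : S → A → B × S) :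
    ∃! h : S → NeListFun A B,
      ∀ (s : S) (a : A), neListCoalg A B (h s) a = ((c s a).1, h ((c s a).2)) := by
  refine ⟨fun s p => runCoalg c s p.1 p.2, fun s a => rfl, ?_⟩
  intro g hg
  funext s p
  obtain ⟨a, w⟩ := p
  induction w generalizing s a with
  | nil =>
    have := congrArg Prod.fst (hg s a)
    simpa [neListCoalg, runCoalg] using this
  | cons b w ih =>
    have := congrFun (congrArg Prod.snd (hg s a)) (b, w)
    simpa [neListCoalg, runCoalg, ih] using this
end

section
/- In the category of polynomial functors, every cartesian monomorphism p → q is a coproduct inclusion: there exists a polynomial p' and an isomorphism q ≅ p + p' under p. -/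
/-!
Since `f` is cartesian, a monomorphism `f` is injective on positions (test it against the
polynomial with one position and the directions of `f i`). Positions of `q` then split into the
image of `f` and its complement `p'`, giving a cartesian morphism `p + p' → q` that is bijective
on positions, hence invertible; its inverse restricted along `p → p + p'` is the identity there
because `p → p + p' → q` is `f`.
-/

universe u

structure PHom (p q : PFunctor.{u}) : Type u where
  onPos : p.A → q.A
  onDir : ∀ i : p.A, q.B (onPos i) → p.B i

/-- Composition of morphisms of polynomial functors. -/
def pcomp {p q r : PFunctor.{u}} (f : PHom p q) (g : PHom q r) : PHom p r where
  onPos := fun i => g.onPos (f.onPos i)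
  onDir := fun i d => f.onDir i (g.onDir (f.onPos i) d)

/-- A morphism of polynomial functors is cartesian when each map on directions is
a bijection. -/
def IsCartesian {p q : PFunctor.{u}} (f : PHom p q) : Prop :=
  ∀ i : p.A, Function.Bijective (f.onDir i)

/-- A monomorphism in the category of polynomial functors. -/
def PMono {p q : PFunctor.{u}} (f : PHom p q) : Prop :=
  ∀ (r : PFunctor.{u}) (α β : PHom r p), pcomp α f = pcomp β f → α = β

/-- Coproduct of polynomial functors, computed positionwise. -/
def psum (p q : PFunctor.{u}) : PFunctor.{u} :=
  ⟨p.A ⊕ q.A, Sum.elim p.B q.B⟩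

namespace PHom

theorem ext {p q : PFunctor.{u}} {f g : PHom p q} (hpos : ∀ i, f.onPos i = g.onPos i)
    (hdir : ∀ i d, f.onDir i d = g.onDir i (cast (congrArg q.B (hpos i)) d)) : f = g := by
  obtain ⟨fp, fd⟩ := f
  obtain ⟨gp, gd⟩ := g
  obtain rfl : fp = gp := funext hpos
  congr
  funext i d
  exact hdir i d

theorem onPos_injective_of_isCartesian_of_pMono {p q : PFunctor.{u}} {f : PHom p q}
    (hc : IsCartesian f) (hm : PMono f) : Function.Injective f.onPos := by
  intro i i' h
  let r : PFunctor.{u} := ⟨PUnit, fun _ => q.B (f.onPos i)⟩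
  let α : PHom r p := ⟨fun _ => i, fun _ => (Equiv.ofBijective _ (hc i)).symm⟩
  let β : PHom r p :=
    ⟨fun _ => i', fun _ d => cast (congrArg q.B h).symm ((Equiv.ofBijective _ (hc i')).symm d)⟩
  have hαβ : pcomp α f = pcomp β f := by
    refine ext (fun _ => h) fun _ (d : q.B (f.onPos i)) => ?_
    simp only [pcomp, α, β, Equiv.ofBijective_symm_apply_apply]
    exact ((cast_cast _ _ d).trans (cast_eq _ d)).symm
  exact congrArg (fun g => g.onPos PUnit.unit) (hm r α β hαβ)

section Inverse

variable {p q : PFunctor.{u}} (f : PHom p q) (hpos : Function.Bijective f.onPos)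
  (hc : IsCartesian f)

noncomputable def invDirEquiv (j : q.A) :
    p.B ((Equiv.ofBijective _ hpos).symm j) ≃ q.B j :=
  (Equiv.ofBijective _ (hc _)).symm.trans
    (Equiv.cast (congrArg q.B (Equiv.ofBijective_apply_symm_apply _ hpos j)))

noncomputable def inv : PHom q p :=
  ⟨(Equiv.ofBijective _ hpos).symm, fun j => invDirEquiv f hpos hc j⟩

theorem pcomp_inv : pcomp f (inv f hpos hc) = ⟨id, fun _ => id⟩ := by
  refine ext (fun i => (Equiv.ofBijective _ hpos).symm_apply_apply i) fun i d => ?_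
  have key : ∀ i' (h : i' = i) (d : p.B i'),
      f.onDir i (cast (congrArg (q.B ∘ f.onPos) h) ((Equiv.ofBijective _ (hc i')).symm d)) =
        cast (congrArg p.B h) d := by
    rintro _ rfl d
    exact Equiv.ofBijective_apply_symm_apply _ _ d
  exact key _ ((Equiv.ofBijective _ hpos).symm_apply_apply i) d

end Inverse

end PHom

def pcompl {p q : PFunctor.{u}} (f : PHom p q) : PFunctor.{u} :=
  ⟨{j : q.A // j ∉ Set.range f.onPos}, fun j => q.B j.1⟩

section SumCompl

variable {p q : PFunctor.{u}} (f : PHom p q)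

/-- The copairing `[f, ι] : p + pcompl f → q`. -/
def sumCompl : PHom (psum p (pcompl f)) q where
  onPos := Sum.elim f.onPos Subtype.val
  onDir
    | Sum.inl i => f.onDir i
    | Sum.inr _ => id

theorem sumCompl_onPos_bijective (hinj : Function.Injective f.onPos) :
    Function.Bijective (sumCompl f).onPos := by
  refine ⟨hinj.sumElim Subtype.val_injective fun i j h => j.2 ⟨i, h⟩, fun j => ?_⟩
  by_cases hj : j ∈ Set.range f.onPos
  · obtain ⟨i, rfl⟩ := hj
    exact ⟨Sum.inl i, rfl⟩
  · exact ⟨Sum.inr ⟨j, hj⟩, rfl⟩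

theorem sumCompl_isCartesian (hc : IsCartesian f) : IsCartesian (sumCompl f)
  | Sum.inl i => hc i
  | Sum.inr _ => Function.bijective_id

end SumCompl

/-- Every cartesian monomorphism `p → q` of polynomial functors is a coproduct
inclusion: there is a polynomial `p'` and an isomorphism `q ≅ p + p'` under `p`,
i.e. composing `f` with the isomorphism gives the coproduct inclusion. -/
theorem cartesian_mono_is_coproduct_inclusion {p q : PFunctor.{u}} (f : PHom p q)
    (hc : IsCartesian f) (hm : PMono f) :
    ∃ (p' : PFunctor.{u}) (epos : q.A ≃ (psum p p').A)
      (edir : ∀ j : q.A, (psum p p').B (epos j) ≃ q.B j),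
      pcomp f ⟨fun j => epos j, fun j => edir j⟩ =
        (⟨Sum.inl, fun _ => id⟩ : PHom p (psum p p')) := by
  have hpos := sumCompl_onPos_bijective f (PHom.onPos_injective_of_isCartesian_of_pMono hc hm)
  have hc' := sumCompl_isCartesian f hc
  refine ⟨pcompl f, (Equiv.ofBijective _ hpos).symm, PHom.invDirEquiv _ hpos hc', ?_⟩
  -- `f` is definitionally the inclusion `p → p + pcompl f` followed by `sumCompl f`
  change pcomp ⟨Sum.inl, fun _ => id⟩ (pcomp (sumCompl f) (PHom.inv _ hpos hc')) = _
  rw [PHom.pcomp_inv]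
  rfl
end

section
/- The List monad on Set, equipped with the constant given by the empty list, is not exceptional: the map List + 1 → List sending the extra point to the empty list is not a morphism of monads (multiplication is not preserved). -/
/-- The functor `List + 1`, i.e. `X ↦ List X + 1`. -/
def ListPlus (X : Type) : Type := List X ⊕ PUnit

/-- The retraction `List + 1 → List` sending the extra point to the empty list. -/
def ξ (X : Type) : ListPlus X → List X := Sum.elim id (fun _ => [])

/-- Flatten a list of `List + 1` values with exception semantics: if any entry is
the extra point, the result is the extra point; otherwise concatenate. -/
def seqL {X : Type} : List (ListPlus X) → ListPlus X :=
  fun l => l.foldr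
    (fun a acc =>
      match a, acc with
      | Sum.inl l₁, Sum.inl l₂ => Sum.inl (l₁ ++ l₂)
      | _, _ => Sum.inr PUnit.unit)
    (Sum.inl [])

/-- Multiplication of the `List + 1` monad, with exception semantics. -/
def ListPlus.μ (X : Type) : ListPlus (ListPlus X) → ListPlus X :=
  Sum.elim seqL (fun _ => Sum.inr PUnit.unit)

theorem seqL_cons_eq_inr_of_eq_inr {X : Type} (a : ListPlus X) {l : List (ListPlus X)}
    (h : seqL l = Sum.inr PUnit.unit) : seqL (a :: l) = Sum.inr PUnit.unit := by
  -- `ListPlus` is not reducible, so `rw`/`simp` cannot unfold `seqL`; expose its step by `change`.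
  change (match a, seqL l with
    | Sum.inl l₁, Sum.inl l₂ => Sum.inl (l₁ ++ l₂)
    | _, _ => Sum.inr PUnit.unit) = _
  rw [h]
  cases a <;> rfl

theorem seqL_eq_inr_of_mem {X : Type} {l : List (ListPlus X)}
    (h : (Sum.inr PUnit.unit : ListPlus X) ∈ l) : seqL l = Sum.inr PUnit.unit := by
  induction l with
  | nil => exact absurd h List.not_mem_nil
  | cons a l ih =>
    rcases List.mem_cons.mp h with rfl | hl
    · rfl
    · exact seqL_cons_eq_inr_of_eq_inr a (ih hl)

theorem ξ_μ_eq_nil_of_mem {X : Type} {l : List (ListPlus X)}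
    (h : (Sum.inr PUnit.unit : ListPlus X) ∈ l) : ξ X (ListPlus.μ X (Sum.inl l)) = [] := by
  change ξ X (seqL l) = []
  rw [seqL_eq_inr_of_mem h]
  rfl

/-- The List monad with the empty-list constant is not exceptional: the retraction
`ξ : List + 1 → List` sending the extra point to the empty list does not preserve
multiplication (where the List monad multiplication is concatenation/join). -/
theorem list_not_exceptional :
    ¬ ∀ (X : Type) (z : ListPlus (ListPlus X)),
        ξ X (ListPlus.μ X z) = List.flatten (List.map (ξ X) (ξ (ListPlus X) z)) := by
  intro h
  let z : ListPlus (ListPlus Unit) := Sum.inl [Sum.inr PUnit.unit, Sum.inl [()]]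
  have hξμ : ξ Unit (ListPlus.μ Unit z) = [] := ξ_μ_eq_nil_of_mem List.mem_cons_self
  have hjoin : List.flatten (List.map (ξ Unit) (ξ (ListPlus Unit) z)) = [()] := rfl
  exact List.cons_ne_nil () [] (hjoin.symm.trans ((h Unit z).symm.trans hξμ))
end

section
/- The trace on sets and partial functions satisfies the sliding axiom: for partial functions f : A + U ⇀ B + V and g : V ⇀ U, Tr_U(f ; (B + g)) = Tr_V((A + g) ; f). -/
inductive Steps {X Y U : Type} (f : X ⊕ U → Option (Y ⊕ U)) : X ⊕ U → Y → Prop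
  | done {x : X ⊕ U} {b : Y} : f x = some (Sum.inl b) → Steps f x b
  | step {x : X ⊕ U} {u : U} {b : Y} :
      f x = some (Sum.inr u) → Steps f (Sum.inr u) b → Steps f x b

section Aux

variable {A B U V : Type} (f : A ⊕ U → Option (B ⊕ V)) (g : V → Option U)

private def hOne : A ⊕ U → Option (B ⊕ U) := fun x =>
  (f x).bind (Sum.elim (fun b => some (Sum.inl b)) (fun v => Option.map Sum.inr (g v)))

private def hTwo : A ⊕ V → Option (B ⊕ V) := fun x =>
  (Sum.elim (fun a => some (Sum.inl a)) (fun v => Option.map Sum.inr (g v)) x).bind f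

private lemma fwd {b : B} : ∀ x, Steps (hOne f g) x b →
    f x = some (Sum.inl b) ∨ ∃ v, f x = some (Sum.inr v) ∧ Steps (hTwo f g) (Sum.inr v) b := by
  intro x h
  induction h with
  | @done x b hx =>
    rcases hf : f x with _ | (b' | v) <;> simp [hOne, hf] at hx
    subst hx; exact Or.inl rfl
  | @step x u b hx _ ih =>
    rcases hf : f x with _ | (b' | v) <;> simp [hOne, hf] at hx
    refine Or.inr ⟨v, rfl, ?_⟩
    rcases ih with h1 | ⟨v', hv', hs⟩
    · exact Steps.done (by simp [hTwo, hx, h1])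
    · exact Steps.step (by simp [hTwo, hx, hv']) hs

private lemma hTwo_ne_none {b : B} {x} (h : Steps (hTwo f g) x b) :
    ∃ z, hTwo f g x = some z := by
  cases h with
  | done hx => exact ⟨_, hx⟩
  | step hx _ => exact ⟨_, hx⟩

private lemma bwd {b : B} : ∀ x (y : A ⊕ U), f y = hTwo f g x →
    Steps (hTwo f g) x b → Steps (hOne f g) y b := by
  intro x y hy h
  induction h generalizing y with
  | done hx => exact Steps.done (by simp [hOne, hy, hx])
  | @step x v' b hx h ih =>
    obtain ⟨z, hz⟩ := hTwo_ne_none f g h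
    rcases hg : g v' with _ | u'
    · simp [hTwo, hg] at hz
    · have hrel : f (Sum.inr u') = hTwo f g (Sum.inr v') := by simp [hTwo, hg]
      exact Steps.step (x := y) (u := u') (by simp [hOne, hy, hx, hg]) (ih _ hrel)

end Aux

/-- The sliding axiom for the trace on sets and partial functions: for
`f : A + U ⇀ B + V` and `g : V ⇀ U`, `Tr_U(f ; (B + g)) = Tr_V((A + g) ; f)`,
stated as an equality of graphs of partial functions. -/
theorem trace_sliding (A B U V : Type)
    (f : A ⊕ U → Option (B ⊕ V)) (g : V → Option U) (a : A) (b : B) :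
    Steps
      (fun x : A ⊕ U =>
        (f x).bind (Sum.elim (fun b => some (Sum.inl b)) (fun v => Option.map Sum.inr (g v))))
      (Sum.inl a) b
    ↔ Steps
      (fun x : A ⊕ V =>
        (Sum.elim (fun a => some (Sum.inl a)) (fun v => Option.map Sum.inr (g v)) x).bind f)
      (Sum.inl a) b := by
  show Steps (hOne f g) (Sum.inl a) b ↔ Steps (hTwo f g) (Sum.inl a) b
  constructor
  · intro h
    rcases fwd f g _ h with h1 | ⟨v, hv, hs⟩
    · exact Steps.done (by simp [hTwo, h1])
    · exact Steps.step (by simp [hTwo, hv]) hs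
  · intro h
    exact bwd f g (Sum.inl a) (Sum.inl a) (by simp [hTwo]) h
end

section
/- The trace on sets and partial functions satisfies the vanishing axioms: Tr_∅(f) = f for f : A + ∅ ⇀ B + ∅ (under the canonical isomorphisms), and Tr_{U+V}(f) = Tr_U(Tr_V(f)) for f : A + (U + V) ⇀ B + (U + V) (under the associativity isomorphisms). -/
/-- Iterated feedback through `U` for a machine given relationally by the graph
`R` of a partial function `X + U ⇀ Y + U`. -/
inductive StepsR {X Y U : Type} (R : X ⊕ U → Y ⊕ U → Prop) : X ⊕ U → Y → Prop
  | done {x : X ⊕ U} {b : Y} : R x (Sum.inl b) → StepsR R x b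
  | step {x : X ⊕ U} {u : U} {b : Y} :
      R x (Sum.inr u) → StepsR R (Sum.inr u) b → StepsR R x b

variable {A B U V : Type}

def gmap (f : A ⊕ (U ⊕ V) → Option (B ⊕ (U ⊕ V))) : (A ⊕ U) ⊕ V → Option ((B ⊕ U) ⊕ V) :=
  fun z => Option.map (⇑(Equiv.sumAssoc B U V).symm) (f ((Equiv.sumAssoc A U V) z))

lemma gmap_eq_some {f : A ⊕ (U ⊕ V) → Option (B ⊕ (U ⊕ V))} {x : (A ⊕ U) ⊕ V}
    {z : (B ⊕ U) ⊕ V} :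
    gmap f x = some z ↔ f ((Equiv.sumAssoc A U V) x) = some ((Equiv.sumAssoc B U V) z) := by
  constructor
  · intro h
    rcases Option.map_eq_some_iff.mp h with ⟨w, hw, hz⟩
    rw [hw]
    congr 1
    exact (Equiv.symm_apply_eq _).mp hz
  · intro h
    simp [gmap, h]

lemma fwd_s15 {f : A ⊕ (U ⊕ V) → Option (B ⊕ (U ⊕ V))} {x' : A ⊕ (U ⊕ V)} {b : B}
    (h : Steps f x' b) :
    ∀ x : (A ⊕ U) ⊕ V, (Equiv.sumAssoc A U V) x = x' →
      ∃ y, Steps (gmap f) x y ∧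
        (y = Sum.inl b ∨ ∃ u, y = Sum.inr u ∧
          StepsR (fun p q => Steps (gmap f) (Sum.inl p) q) (Sum.inr u) b) := by
  induction h with
  | done hf =>
    intro x hx
    exact ⟨Sum.inl _, Steps.done (by rw [gmap_eq_some, hx]; simpa using hf), Or.inl rfl⟩
  | step hf _ ih =>
    intro x hx
    rename_i x0 u b0 _
    cases u with
    | inl u =>
      rcases ih (Sum.inl (Sum.inr u)) (by simp) with ⟨y, hy, hQ⟩
      refine ⟨Sum.inr u, Steps.done ?_, Or.inr ⟨u, rfl, ?_⟩⟩
      · rw [gmap_eq_some, hx]; simpa using hf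
      · rcases hQ with rfl | ⟨u', rfl, hR⟩
        · exact StepsR.done hy
        · exact StepsR.step hy hR
    | inr v =>
      rcases ih (Sum.inr v) (by simp) with ⟨y, hy, hQ⟩
      refine ⟨y, Steps.step ?_ hy, hQ⟩
      rw [gmap_eq_some, hx]; simpa using hf

lemma bwd1 {f : A ⊕ (U ⊕ V) → Option (B ⊕ (U ⊕ V))} {x : (A ⊕ U) ⊕ V} {y : B ⊕ U}
    (h : Steps (gmap f) x y) (b : B) :
    (y = Sum.inl b → Steps f ((Equiv.sumAssoc A U V) x) b) ∧
    (∀ u, y = Sum.inr u → Steps f (Sum.inr (Sum.inl u)) b →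
      Steps f ((Equiv.sumAssoc A U V) x) b) := by
  induction h with
  | done hg =>
    rw [gmap_eq_some] at hg
    constructor
    · rintro rfl
      exact Steps.done (by simpa using hg)
    · rintro u rfl hcont
      exact Steps.step (by simpa using hg) hcont
  | step hg _ ih =>
    rw [gmap_eq_some] at hg
    constructor
    · rintro rfl
      exact Steps.step (by simpa using hg) (by simpa using ih.1 rfl)
    · rintro u rfl hcont
      exact Steps.step (by simpa using hg) (by simpa using ih.2 u rfl hcont)

lemma bwd2 {f : A ⊕ (U ⊕ V) → Option (B ⊕ (U ⊕ V))} {w : A ⊕ U} {b : B}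
    (h : StepsR (fun p q => Steps (gmap f) (Sum.inl p) q) w b) :
    Steps f ((Equiv.sumAssoc A U V) (Sum.inl w)) b := by
  induction h with
  | done hR => exact (bwd1 hR _).1 rfl
  | step hR _ ih => exact (bwd1 hR _).2 _ rfl (by simpa using ih)

/-- The vanishing axioms for the trace on sets and partial functions:
`Tr_∅(f) = f` (under the canonical isomorphisms) and
`Tr_{U+V}(f) = Tr_U(Tr_V(f))` (under the associativity isomorphisms),
stated as equalities of graphs of partial functions. -/
theorem trace_vanishing :
    -- vanishing for the empty set
    (∀ (A B : Type) (f : A ⊕ Empty → Option (B ⊕ Empty)) (a : A) (b : B),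
      Steps f (Sum.inl a) b ↔ f (Sum.inl a) = some (Sum.inl b)) ∧
    -- vanishing for a disjoint union
    (∀ (A B U V : Type) (f : A ⊕ (U ⊕ V) → Option (B ⊕ (U ⊕ V))) (a : A) (b : B),
      Steps f (Sum.inl a) b ↔
      StepsR
        (fun (x : A ⊕ U) (y : B ⊕ U) =>
          Steps
            (fun z : (A ⊕ U) ⊕ V =>
              Option.map (⇑(Equiv.sumAssoc B U V).symm) (f ((Equiv.sumAssoc A U V) z)))
            (Sum.inl x) y)
        (Sum.inl a) b) := by
  constructor
  · intro A B f a b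
    constructor
    · intro h
      cases h with
      | done h => exact h
      | step h _ => exact (by assumption : Empty).elim
    · exact Steps.done
  · intro A B U V f a b
    constructor
    · intro h
      rcases fwd_s15 h (Sum.inl (Sum.inl a)) (by simp) with ⟨y, hy, hQ⟩
      rcases hQ with rfl | ⟨u, rfl, hR⟩
      · exact StepsR.done hy
      · exact StepsR.step hy hR
    · intro h
      simpa using bwd2 (f := f) h
end

section
/- The trace on sets and partial functions satisfies the superposing (strength) axiom: for f : A + U ⇀ B + U and any set C, Tr_U((C + f)) = C + Tr_U(f) as partial functions C + A ⇀ C + B (under the associativity isomorphisms identifying (C + A) + U with C + (A + U)). -/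
/-- `id_C + f`, regarded (under the associativity isomorphism
`(C + A) + U ≅ C + (A + U)`) as a partial function `(C + A) + U ⇀ (C + B) + U`. -/
def superpose {A B C U : Type} (f : A ⊕ U → Option (B ⊕ U)) :
    (C ⊕ A) ⊕ U → Option ((C ⊕ B) ⊕ U)
  | Sum.inl (Sum.inl c) => some (Sum.inl (Sum.inl c))
  | Sum.inl (Sum.inr a) =>
      Option.map (Sum.elim (fun b => Sum.inl (Sum.inr b)) Sum.inr) (f (Sum.inl a))
  | Sum.inr u =>
      Option.map (Sum.elim (fun b => Sum.inl (Sum.inr b)) Sum.inr) (f (Sum.inr u))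

/-- Embedding of positions `A + U` into `(C + A) + U`. -/
def embedPos {A C U : Type} : A ⊕ U → (C ⊕ A) ⊕ U
  | Sum.inl a => Sum.inl (Sum.inr a)
  | Sum.inr u => Sum.inr u

lemma superpose_embed {A B C U : Type} (f : A ⊕ U → Option (B ⊕ U)) (p : A ⊕ U) :
    superpose (C := C) f (embedPos p) =
      Option.map (Sum.elim (fun b => Sum.inl (Sum.inr b)) Sum.inr) (f p) := by
  cases p <;> rfl

lemma steps_embed_fwd {A B C U : Type} (f : A ⊕ U → Option (B ⊕ U))
    {z : (C ⊕ A) ⊕ U} {y : C ⊕ B} (h : Steps (superpose (C := C) f) z y) :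
    ∀ p : A ⊕ U, z = embedPos p → ∃ b : B, y = Sum.inr b ∧ Steps f p b := by
  induction h with
  | done hx =>
    rintro p rfl
    rw [superpose_embed] at hx
    rcases Option.map_eq_some_iff.1 hx with ⟨w, hw, he⟩
    cases w with
    | inl b => exact ⟨b, by simpa using he.symm, Steps.done hw⟩
    | inr u => simp at he
  | step hx _ ih =>
    rintro p rfl
    rw [superpose_embed] at hx
    rcases Option.map_eq_some_iff.1 hx with ⟨w, hw, he⟩
    cases w with
    | inl b => simp at he
    | inr u =>
      simp at he
      subst he
      rcases ih (Sum.inr u) rfl with ⟨b, rfl, hb⟩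
      exact ⟨b, rfl, Steps.step hw hb⟩

lemma steps_embed_bwd {A B C U : Type} (f : A ⊕ U → Option (B ⊕ U))
    {p : A ⊕ U} {b : B} (h : Steps f p b) :
    Steps (superpose (C := C) f) (embedPos p) (Sum.inr b) := by
  induction h with
  | done hx => exact Steps.done (by rw [superpose_embed, hx]; rfl)
  | step hx _ ih => exact Steps.step (by rw [superpose_embed, hx]; rfl) ih

/-- The superposing (strength) axiom for the trace on sets and partial functions:
`Tr_U(C + f) = C + Tr_U(f)` as partial functions `C + A ⇀ C + B`, stated as an
equality of graphs of partial functions. -/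
theorem trace_superposing (A B C U : Type) (f : A ⊕ U → Option (B ⊕ U))
    (x : C ⊕ A) (y : C ⊕ B) :
    Steps (superpose (C := C) f) (Sum.inl x) y ↔
      ((∃ c : C, x = Sum.inl c ∧ y = Sum.inl c) ∨
       (∃ (a : A) (b : B), x = Sum.inr a ∧ y = Sum.inr b ∧ Steps f (Sum.inl a) b)) := by
  constructor
  · intro h
    cases x with
    | inl c =>
      left
      refine ⟨c, rfl, ?_⟩
      cases h with
      | done hx => simpa [superpose] using hx.symm
      | step hx _ => simp [superpose] at hx
    | inr a =>
      right
      rcases steps_embed_fwd f h (Sum.inl a) rfl with ⟨b, rfl, hb⟩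
      exact ⟨a, b, rfl, rfl, hb⟩
  · rintro (⟨c, rfl, rfl⟩ | ⟨a, b, rfl, rfl, hb⟩)
    · exact Steps.done rfl
    · exact steps_embed_bwd f hb
end

section
/- Uniqueness of strict iteration: if h : A ⇀ B satisfies h = f ; [h, id_B] for f : A ⇀ A + B, and additionally h(a) is undefined whenever the f-iteration from a diverges (never reaches B), then h = iter(f), where iter(f)(a) = b iff finitely many applications of f through the A-component reach inr(b). -/
/-!
Unfolding the fixed-point equation along a derivation of `IterR f a b` shows that every fixed
point `h` extends `iter(f)`. Where the iteration diverges, `h` is undefined by assumption, so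
`h` has no further values and the two coincide.
-/

/-- `IterR f a b` holds when finitely many applications of `f : A ⇀ A + B`,
following the `A`-component, starting at `a`, reach `inr b`. -/
inductive IterR {A B : Type} (f : A → Option (A ⊕ B)) : A → B → Prop
  | done {a : A} {b : B} : f a = some (Sum.inr b) → IterR f a b
  | step {a a' : A} {b : B} :
      f a = some (Sum.inl a') → IterR f a' b → IterR f a b

theorem IterR.apply_eq_some_of_fixedPoint {A B : Type} {f : A → Option (A ⊕ B)}
    {h : A → Option B} (hfix : ∀ a : A, h a = (f a).bind (Sum.elim h some)) {a : A} {b : B}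
    (hab : IterR f a b) : h a = some b := by
  induction hab with
  | done hf => rw [hfix, hf]; rfl
  | step hf _ ih => rw [hfix, hf]; exact ih

/-- Uniqueness of strict iteration: if `h : A ⇀ B` satisfies the fixed-point
equation `h = f ; [h, id_B]` and is undefined whenever the `f`-iteration diverges,
then `h = iter(f)`, i.e. `h a = b` exactly when finitely many applications of `f`
through the `A`-component reach `inr b`. -/
theorem iter_unique (A B : Type) (f : A → Option (A ⊕ B)) (h : A → Option B)
    (hfix : ∀ a : A, h a = (f a).bind (Sum.elim h some))
    (hdiv : ∀ a : A, (¬ ∃ b : B, IterR f a b) → h a = none) :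
    ∀ (a : A) (b : B), h a = some b ↔ IterR f a b := by
  intro a b
  refine ⟨fun hab => ?_, IterR.apply_eq_some_of_fixedPoint hfix⟩
  obtain ⟨b', hb'⟩ : ∃ b' : B, IterR f a b' := by
    by_contra hdiverges
    simp [hdiv a hdiverges] at hab
  have hb : some b = some b' := hab ▸ IterR.apply_eq_some_of_fixedPoint hfix hb'
  exact Option.some_injective B hb ▸ hb'
end
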